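/- arXiv:2207.13200 — 6 statements merged into one kernel-verified Lean document; each statement's English description precedes it below -/
import Mathlib

section
/- Assume λ < 1 and that the step size satisfies 0 < γ < (1−λ)τ/(L+(1+λ)τ)². Set η = sqrt(1 − 2γτ(1−λ) + γ²(L+(1+λ)τ)²). Then 0 < η < 1, there exists a unique x* ∈ E with G(x*) = 0, and for every t ≥ 1 the SD-RED iterates satisfy ‖x^t − x*‖ ≤ η^t · ‖x⁰ − x*‖ + τσε · γ/(1−η). -/
/-! The exact step `T x = x - γ • G x` is an `η`-contraction: `G` is `τ(1-λ)`-strongly monotone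
(the gradient of a convex function is monotone and `D` is `λ`-Lipschitz) and
`(L+(1+λ)τ)`-Lipschitz, and expanding `‖(x - y) - γ • (G x - G y)‖²` yields `η²`. Its fixed point
is the unique zero of `G`. An SD-RED iterate differs from the exact step by `γτ(D̂ - D)`, of norm
at most `γτσε`, so unrolling the perturbed contraction sums these errors to at most a geometric
series `γτσε / (1 - η)`. -/

open Set
open scoped InnerProductSpace

theorem ConvexOn.apply_sub_le_of_hasFDerivAt {F : Type*} [NormedAddCommGroup F]
    [NormedSpace ℝ F] {f : F → ℝ} (hf : ConvexOn ℝ univ f) {f' : F →L[ℝ] ℝ} {x : F}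
    (hx : HasFDerivAt f f' x) (y : F) : f' (y - x) ≤ f y - f x := by
  let ℓ : ℝ →ᵃ[ℝ] F := AffineMap.lineMap x y
  have hℓ : ∀ t : ℝ, ℓ t = t • (y - x) + x := fun t => AffineMap.lineMap_apply_module' x y t
  have hconv : ConvexOn ℝ univ (f ∘ ℓ) := by simpa using hf.comp_affineMap ℓ
  have hderiv : HasDerivAt (f ∘ ℓ) (f' (y - x)) 0 := by
    have hline : HasDerivAt ℓ (y - x) 0 := by
      rw [show (ℓ : ℝ → F) = fun t => t • (y - x) + x from funext hℓ]
      simpa using ((hasDerivAt_id (0 : ℝ)).smul_const (y - x)).add_const x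
    exact (by simpa [hℓ] using hx : HasFDerivAt f f' (ℓ 0)).comp_hasDerivAt 0 hline
  simpa [slope, hℓ] using
    hconv.le_slope_of_hasDerivAt (mem_univ 0) (mem_univ 1) zero_lt_one hderiv

theorem ConvexOn.inner_gradient_sub_nonneg {F : Type*} [NormedAddCommGroup F]
    [InnerProductSpace ℝ F] [CompleteSpace F] {f : F → ℝ} {f' : F → F}
    (hf : ConvexOn ℝ univ f) (hf' : ∀ x, HasGradientAt f (f' x) x) (x y : F) :
    0 ≤ ⟪f' x - f' y, x - y⟫_ℝ := by
  have hx := hf.apply_sub_le_of_hasFDerivAt (hf' x).hasFDerivAt y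
  have hy := hf.apply_sub_le_of_hasFDerivAt (hf' y).hasFDerivAt x
  simp only [InnerProductSpace.toDual_apply_apply] at hx hy
  rw [← neg_sub x y, inner_neg_right] at hx
  rw [inner_sub_left]
  linarith

section RED

variable {F : Type*} [NormedAddCommGroup F] [InnerProductSpace ℝ F]

def redOperator (A D : F → F) (τ : ℝ) (x : F) : F := A x + τ • (x - D x)

theorem redOperator_sub_redOperator (A D D' : F → F) (τ : ℝ) (x : F) :
    redOperator A D τ x - redOperator A D' τ x = τ • (D' x - D x) := by
  simp only [redOperator]; module

variable {A D : F → F} {τ lam : ℝ}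

theorem redOperator_strongly_monotone (hA : ∀ x y, 0 ≤ ⟪A x - A y, x - y⟫_ℝ)
    (hD : ∀ x y, ‖D x - D y‖ ≤ lam * ‖x - y‖) (hτ : 0 ≤ τ) (x y : F) :
    τ * (1 - lam) * ‖x - y‖ ^ 2
      ≤ ⟪redOperator A D τ x - redOperator A D τ y, x - y⟫_ℝ := by
  have hsplit : redOperator A D τ x - redOperator A D τ y
      = (A x - A y) + τ • (x - y) - τ • (D x - D y) := by
    simp only [redOperator]; module
  have hDinner : ⟪D x - D y, x - y⟫_ℝ ≤ lam * ‖x - y‖ ^ 2 :=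
    calc ⟪D x - D y, x - y⟫_ℝ ≤ ‖D x - D y‖ * ‖x - y‖ := real_inner_le_norm _ _
      _ ≤ lam * ‖x - y‖ * ‖x - y‖ := by gcongr; exact hD x y
      _ = lam * ‖x - y‖ ^ 2 := by ring
  rw [hsplit, inner_sub_left, inner_add_left, real_inner_smul_left, real_inner_smul_left,
    real_inner_self_eq_norm_sq]
  nlinarith [hA x y, mul_le_mul_of_nonneg_left hDinner hτ]

theorem norm_redOperator_sub_le {L : ℝ} (hA : ∀ x y, ‖A x - A y‖ ≤ L * ‖x - y‖)
    (hD : ∀ x y, ‖D x - D y‖ ≤ lam * ‖x - y‖) (hτ : 0 ≤ τ) (x y : F) :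
    ‖redOperator A D τ x - redOperator A D τ y‖ ≤ (L + (1 + lam) * τ) * ‖x - y‖ := by
  have hsplit : redOperator A D τ x - redOperator A D τ y
      = (A x - A y) + τ • (x - y) - τ • (D x - D y) := by
    simp only [redOperator]; module
  calc ‖redOperator A D τ x - redOperator A D τ y‖
      ≤ ‖A x - A y‖ + ‖τ • (x - y)‖ + ‖τ • (D x - D y)‖ := by
        rw [hsplit]; exact norm_sub_le_of_le (norm_add_le _ _) le_rfl
    _ ≤ L * ‖x - y‖ + τ * ‖x - y‖ + τ * (lam * ‖x - y‖) := by
        rw [norm_smul, norm_smul, Real.norm_of_nonneg hτ]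
        gcongr
        exacts [hA x y, hD x y]
    _ = (L + (1 + lam) * τ) * ‖x - y‖ := by ring

end RED

noncomputable def forwardStepRate (γ m M : ℝ) : ℝ := √(1 - 2 * γ * m + γ ^ 2 * M ^ 2)

theorem forwardStepRate_pos {γ m M : ℝ} (hm : 0 < m) (hmM : m ≤ M) (hγ : γ < m / M ^ 2) :
    0 < forwardStepRate γ m M := by
  have hM : 0 < M := hm.trans_le hmM
  have hγM : γ * M ^ 2 < m := (lt_div_iff₀ (by positivity)).1 hγ
  have hγm : γ * m < 1 := by nlinarith [pow_le_pow_left₀ hm.le hmM 2]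
  refine Real.sqrt_pos.2 ?_
  nlinarith [mul_le_mul_of_nonneg_left (pow_le_pow_left₀ hm.le hmM 2) (sq_nonneg γ)]

theorem forwardStepRate_lt_one {γ m M : ℝ} (hγ0 : 0 < γ) (hγ : γ < m / M ^ 2) :
    forwardStepRate γ m M < 1 := by
  have hM : 0 < M ^ 2 := by
    rcases (sq_nonneg M).eq_or_lt with h | h
    · rw [← h, div_zero] at hγ; linarith
    · exact h
  have hγM : γ * M ^ 2 < m := (lt_div_iff₀ hM).1 hγ
  rw [forwardStepRate, Real.sqrt_lt' one_pos]
  nlinarith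

section ForwardStep

variable {F : Type*} [NormedAddCommGroup F] [InnerProductSpace ℝ F] {A : F → F} {γ m M : ℝ}

theorem norm_forwardStep_sub_sq_le (hmono : ∀ x y, m * ‖x - y‖ ^ 2 ≤ ⟪A x - A y, x - y⟫_ℝ)
    (hlip : ∀ x y, ‖A x - A y‖ ≤ M * ‖x - y‖) (hγ : 0 ≤ γ) (x y : F) :
    ‖(x - γ • A x) - (y - γ • A y)‖ ^ 2 ≤ (1 - 2 * γ * m + γ ^ 2 * M ^ 2) * ‖x - y‖ ^ 2 := by
  have hexpand : ‖(x - γ • A x) - (y - γ • A y)‖ ^ 2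
      = ‖x - y‖ ^ 2 - 2 * γ * ⟪A x - A y, x - y⟫_ℝ + γ ^ 2 * ‖A x - A y‖ ^ 2 := by
    rw [show (x - γ • A x) - (y - γ • A y) = (x - y) - γ • (A x - A y) by module,
      norm_sub_sq_real, real_inner_smul_right, norm_smul, Real.norm_eq_abs, mul_pow, sq_abs,
      real_inner_comm]
    ring
  have hsq : ‖A x - A y‖ ^ 2 ≤ M ^ 2 * ‖x - y‖ ^ 2 := by
    rw [← mul_pow]; exact pow_le_pow_left₀ (norm_nonneg _) (hlip x y) 2
  rw [hexpand]
  nlinarith [hmono x y, mul_le_mul_of_nonneg_left hsq (sq_nonneg γ)]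

theorem norm_forwardStep_sub_le (hmono : ∀ x y, m * ‖x - y‖ ^ 2 ≤ ⟪A x - A y, x - y⟫_ℝ)
    (hlip : ∀ x y, ‖A x - A y‖ ≤ M * ‖x - y‖) (hγ : 0 ≤ γ) (x y : F) :
    ‖(x - γ • A x) - (y - γ • A y)‖ ≤ forwardStepRate γ m M * ‖x - y‖ := by
  rw [forwardStepRate, ← Real.sqrt_sq (norm_nonneg (x - y)), ← Real.sqrt_mul' _ (sq_nonneg _)]
  exact Real.le_sqrt_of_sq_le (norm_forwardStep_sub_sq_le hmono hlip hγ x y)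

theorem existsUnique_eq_zero_of_forwardStep_contracting [CompleteSpace F] [Nonempty F] {η : ℝ}
    (hγ : γ ≠ 0) (hη0 : 0 ≤ η) (hη1 : η < 1)
    (hstep : ∀ x y, ‖(x - γ • A x) - (y - γ • A y)‖ ≤ η * ‖x - y‖) :
    ∃! x, A x = 0 := by
  let T : F → F := fun x => x - γ • A x
  have hfixed : ∀ x, Function.IsFixedPt T x ↔ A x = 0 := fun x => by
    simp [T, Function.IsFixedPt, hγ]
  have hT : ContractingWith ⟨η, hη0⟩ T :=
    ⟨hη1, LipschitzWith.of_dist_le_mul fun x y => by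
      rw [dist_eq_norm, dist_eq_norm]; exact hstep x y⟩
  exact ⟨hT.fixedPoint T, (hfixed _).1 hT.fixedPoint_isFixedPt,
    fun y hy => hT.fixedPoint_unique ((hfixed y).2 hy)⟩

end ForwardStep

theorem le_pow_mul_add_div_one_sub_of_le_mul_add {u : ℕ → ℝ} {η c : ℝ} (hη0 : 0 ≤ η)
    (hη1 : η < 1) (hc : 0 ≤ c) (hu : ∀ k, u (k + 1) ≤ η * u k + c) (t : ℕ) :
    u t ≤ η ^ t * u 0 + c / (1 - η) := by
  have hfix : η * (c / (1 - η)) + c = c / (1 - η) := by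
    field_simp [(sub_pos.2 hη1).ne']; ring
  induction t with
  | zero => simpa using div_nonneg hc (sub_pos.2 hη1).le
  | succ k ih =>
    calc u (k + 1) ≤ η * u k + c := hu k
      _ ≤ η * (η ^ k * u 0 + c / (1 - η)) + c := by gcongr
      _ = η ^ (k + 1) * u 0 + c / (1 - η) := by linear_combination hfix

theorem norm_sub_fixedPt_le_of_perturbed_iteration {F : Type*} [SeminormedAddCommGroup F]
    {T : F → F} {x : ℕ → F} {xstar : F} {η δ : ℝ}
    (hT : ∀ a b, ‖T a - T b‖ ≤ η * ‖a - b‖) (hfix : T xstar = xstar)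
    (hx : ∀ k, ‖x (k + 1) - T (x k)‖ ≤ δ) (hη0 : 0 ≤ η) (hη1 : η < 1) (hδ : 0 ≤ δ) (t : ℕ) :
    ‖x t - xstar‖ ≤ η ^ t * ‖x 0 - xstar‖ + δ / (1 - η) := by
  refine le_pow_mul_add_div_one_sub_of_le_mul_add (u := fun k => ‖x k - xstar‖) hη0 hη1 hδ
    (fun k => ?_) t
  calc ‖x (k + 1) - xstar‖ ≤ ‖x (k + 1) - T (x k)‖ + ‖T (x k) - T xstar‖ := by
        simpa [hfix] using norm_sub_le_norm_sub_add_norm_sub (x (k + 1)) (T (x k)) (T xstar)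
    _ ≤ δ + η * ‖x k - xstar‖ := add_le_add (hx k) (hT _ _)
    _ = η * ‖x k - xstar‖ + δ := add_comm _ _

theorem sdred_contraction_error_bound_general {n : ℕ}
    (g : EuclideanSpace ℝ (Fin n) → ℝ)
    (g' D Dh G Gh : EuclideanSpace ℝ (Fin n) → EuclideanSpace ℝ (Fin n))
    (L lam σ ε τ γ η : ℝ)
    (hL : 0 < L)
    (hgconv : ConvexOn ℝ Set.univ g)
    (hgrad : ∀ x, HasGradientAt g (g' x) x)
    (hgLip : ∀ x y, ‖g' x - g' y‖ ≤ L * ‖x - y‖)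
    (hlam0 : 0 < lam) (hlam1 : lam < 1)
    (hD : ∀ x y, ‖D x - D y‖ ≤ lam * ‖x - y‖)
    (hmis : ∀ x, ‖Dh x - D x‖ ≤ σ * ε)
    (hτ : 0 < τ)
    (hG : ∀ x, G x = g' x + τ • (x - D x))
    (hGh : ∀ x, Gh x = g' x + τ • (x - Dh x))
    (xs : ℕ → EuclideanSpace ℝ (Fin n))
    (hiter : ∀ k, xs (k + 1) = xs k - γ • Gh (xs k))
    (hγ0 : 0 < γ) (hγ : γ < (1 - lam) * τ / (L + (1 + lam) * τ) ^ 2)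
    (hη : η = Real.sqrt (1 - 2 * γ * τ * (1 - lam) + γ ^ 2 * (L + (1 + lam) * τ) ^ 2)) :
    0 < η ∧ η < 1 ∧ (∃! xstar : EuclideanSpace ℝ (Fin n), G xstar = 0) ∧
      ∀ xstar : EuclideanSpace ℝ (Fin n), G xstar = 0 →
        ∀ t : ℕ, 1 ≤ t →
          ‖xs t - xstar‖ ≤ η ^ t * ‖xs 0 - xstar‖ + τ * σ * ε * (γ / (1 - η)) := by
  obtain rfl : G = redOperator g' D τ := funext hG
  obtain rfl : Gh = redOperator g' Dh τ := funext hGh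
  have hmono := redOperator_strongly_monotone (hgconv.inner_gradient_sub_nonneg hgrad) hD hτ.le
  have hlip := norm_redOperator_sub_le hgLip hD hτ.le
  have hrate : η = forwardStepRate γ (τ * (1 - lam)) (L + (1 + lam) * τ) := by
    rw [hη, forwardStepRate]; ring_nf
  have hη0 : 0 < η := hrate ▸ forwardStepRate_pos (by nlinarith) (by nlinarith) (by rwa [mul_comm])
  have hη1 : η < 1 := hrate ▸ forwardStepRate_lt_one hγ0 (by rwa [mul_comm])
  have hstep := hrate ▸ norm_forwardStep_sub_le hmono hlip hγ0.le
  refine ⟨hη0, hη1, existsUnique_eq_zero_of_forwardStep_contracting hγ0.ne' hη0.le hη1 hstep,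
    fun xstar hxstar t _ => ?_⟩
  have hσε : 0 ≤ σ * ε := (norm_nonneg _).trans (hmis 0)
  have hpert : ∀ k, ‖xs (k + 1) - (xs k - γ • redOperator g' D τ (xs k))‖ ≤ γ * τ * (σ * ε) :=
    fun k => by
      rw [hiter, sub_sub_sub_cancel_left, ← smul_sub, redOperator_sub_redOperator, smul_smul,
        norm_smul, Real.norm_of_nonneg (by positivity)]
      gcongr
      exact hmis _
  calc ‖xs t - xstar‖ ≤ η ^ t * ‖xs 0 - xstar‖ + γ * τ * (σ * ε) / (1 - η) :=
        norm_sub_fixedPt_le_of_perturbed_iteration hstep (by simp [hxstar]) hpert hη0.le hη1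
          (mul_nonneg (by positivity) hσε) t
    _ = η ^ t * ‖xs 0 - xstar‖ + τ * σ * ε * (γ / (1 - η)) := by ring

/-- SD-RED with a mismatched prior under a contractive true prior (Theorem 1):
linear convergence to the unique zero of `G` up to an error proportional to `τσε`. -/
theorem sdred_contraction_error_bound {n : ℕ}
    (g : EuclideanSpace ℝ (Fin n) → ℝ)
    (g' D Dh G Gh : EuclideanSpace ℝ (Fin n) → EuclideanSpace ℝ (Fin n))
    (L lam σ ε τ γ η : ℝ)
    (hL : 0 < L)
    (hgconv : ConvexOn ℝ Set.univ g)
    (hgrad : ∀ x, HasGradientAt g (g' x) x)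
    (hgLip : ∀ x y, ‖g' x - g' y‖ ≤ L * ‖x - y‖)
    (hlam0 : 0 < lam) (hlam1 : lam < 1)
    (hD : ∀ x y, ‖D x - D y‖ ≤ lam * ‖x - y‖)
    (hσ : 0 < σ) (hε : 0 < ε)
    (hmis : ∀ x, ‖Dh x - D x‖ ≤ σ * ε)
    (hτ : 0 < τ)
    (hG : ∀ x, G x = g' x + τ • (x - D x))
    (hGh : ∀ x, Gh x = g' x + τ • (x - Dh x))
    (xs : ℕ → EuclideanSpace ℝ (Fin n))
    (hiter : ∀ k, xs (k + 1) = xs k - γ • Gh (xs k))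
    (hγ0 : 0 < γ) (hγ : γ < (1 - lam) * τ / (L + (1 + lam) * τ) ^ 2)
    (hη : η = Real.sqrt (1 - 2 * γ * τ * (1 - lam) + γ ^ 2 * (L + (1 + lam) * τ) ^ 2)) :
    0 < η ∧ η < 1 ∧ (∃! xstar : EuclideanSpace ℝ (Fin n), G xstar = 0) ∧
      ∀ xstar : EuclideanSpace ℝ (Fin n), G xstar = 0 →
        ∀ t : ℕ, 1 ≤ t →
          ‖xs t - xstar‖ ≤ η ^ t * ‖xs 0 - xstar‖ + τ * σ * ε * (γ / (1 - η)) :=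
  sdred_contraction_error_bound_general g g' D Dh G Gh L lam σ ε τ γ η hL hgconv hgrad hgLip hlam0
    hlam1 hD hmis hτ hG hGh xs hiter hγ0 hγ hη
end

section
/- Assume D is nonexpansive (λ = 1), the step size satisfies 0 < γ < 1/(L+2τ), there exists x* ∈ E with G(x*) = 0, and there exists R > 0 such that the SD-RED iterates satisfy ‖x^k − x*‖ ≤ R for all k ≥ 0. Then for every t ≥ 1, min_{1 ≤ i ≤ t} ‖G(x^{i−1})‖² ≤ (1/t)·∑_{i=1}^{t} ‖G(x^{i−1})‖² ≤ B₁/t + τσε·B₂, where B₁ = (L+2τ)R²/γ and B₂ = (L+2τ)(2R + γτσε). -/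
/-!
`G = ∇g + τ (id - D)` is cocoercive with constant `L + 2τ`: `∇g` is `1/L`-cocoercive by the
Baillon–Haddad argument (first-order convexity together with the descent lemma), `id - D` is
`1/2`-cocoercive because `D` is nonexpansive, and cocoercivity constants add. Cocoercivity and
`G x⋆ = 0` make an exact step of size `γ ≤ 1/(L + 2τ)` decrease `‖x - x⋆‖²` by at least
`γ ‖G x‖² / (L + 2τ)` and keep it in the ball of radius `R`; the mismatched prior moves the step by
at most `γτσε`, which costs at most `2γτσεR + (γτσε)²`. Telescoping gives the bound on the sum,
and the minimum is at most the average.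
-/

open InnerProductSpace AffineMap Set Finset

section Cocoercive

variable {E : Type*} [NormedAddCommGroup E] [InnerProductSpace ℝ E]

-- `T` is `1 / K`-cocoercive in the usual terminology.
def CocoerciveWith (K : ℝ) (T : E → E) : Prop :=
  ∀ x y, ‖T x - T y‖ ^ 2 ≤ K * ⟪T x - T y, x - y⟫_ℝ

namespace CocoerciveWith

variable {K K' : ℝ} {T T' : E → E}

lemma const_smul (hT : CocoerciveWith K T) (c : ℝ) :
    CocoerciveWith (K * c) (fun x => c • T x) := fun x y => by
  rw [← smul_sub, norm_smul, mul_pow, Real.norm_eq_abs, sq_abs, real_inner_smul_left]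
  calc c ^ 2 * ‖T x - T y‖ ^ 2 ≤ c ^ 2 * (K * ⟪T x - T y, x - y⟫_ℝ) := by gcongr; exact hT x y
    _ = K * c * (c * ⟪T x - T y, x - y⟫_ℝ) := by ring

lemma add (hT : CocoerciveWith K T) (hT' : CocoerciveWith K' T') (hK : 0 < K) (hK' : 0 < K') :
    CocoerciveWith (K + K') (fun x => T x + T' x) := fun x y => by
  rw [add_sub_add_comm, inner_add_left]
  set u := T x - T y
  set v := T' x - T' y
  refine le_of_mul_le_mul_left ?_ (mul_pos hK hK')
  calc K * K' * ‖u + v‖ ^ 2 ≤ K * K' * (‖u‖ + ‖v‖) ^ 2 := by gcongr; exact norm_add_le u v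
    _ ≤ (K + K') * (K' * ‖u‖ ^ 2 + K * ‖v‖ ^ 2) := by
        nlinarith [sq_nonneg (K' * ‖u‖ - K * ‖v‖)]
    _ ≤ (K + K') * (K' * (K * ⟪u, x - y⟫_ℝ) + K * (K' * ⟪v, x - y⟫_ℝ)) := by
        gcongr
        exacts [hT x y, hT' x y]
    _ = K * K' * ((K + K') * (⟪u, x - y⟫_ℝ + ⟪v, x - y⟫_ℝ)) := by ring

end CocoerciveWith

lemma cocoerciveWith_two_sub_of_nonexpansive {D : E → E} (hD : ∀ x y, ‖D x - D y‖ ≤ ‖x - y‖) :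
    CocoerciveWith 2 (fun x => x - D x) := fun x y => by
  rw [sub_sub_sub_comm]
  have hsq : ‖D x - D y‖ ^ 2 ≤ ‖x - y‖ ^ 2 := by gcongr; exact hD x y
  set u := x - y
  set v := D x - D y
  calc ‖u - v‖ ^ 2 = ‖u‖ ^ 2 - 2 * ⟪u, v⟫_ℝ + ‖v‖ ^ 2 := norm_sub_sq_real u v
    _ ≤ 2 * (‖u‖ ^ 2 - ⟪v, u⟫_ℝ) := by rw [real_inner_comm]; linarith
    _ = 2 * ⟪u - v, u⟫_ℝ := by rw [inner_sub_left u v u, real_inner_self_eq_norm_sq]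

end Cocoercive

section Gradient

variable {E : Type*} [NormedAddCommGroup E] [InnerProductSpace ℝ E] [CompleteSpace E]
  {g : E → ℝ} {g' : E → E}

lemma hasDerivAt_comp_lineMap_of_hasGradientAt (hgrad : ∀ x, HasGradientAt g (g' x) x)
    (x y : E) (t : ℝ) :
    HasDerivAt (fun t => g (lineMap x y t)) ⟪g' (lineMap x y t), y - x⟫_ℝ t :=
  ((hgrad _).hasFDerivAt.comp_hasDerivAt t hasDerivAt_lineMap).congr_deriv (by simp)

lemma ConvexOn.inner_gradient_le_sub (hgconv : ConvexOn ℝ univ g)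
    (hgrad : ∀ x, HasGradientAt g (g' x) x) (x y : E) :
    ⟪g' x, y - x⟫_ℝ ≤ g y - g x := by
  have hline : ConvexOn ℝ univ (fun t => g (lineMap x y t)) :=
    hgconv.comp_affineMap (lineMap x y)
  simpa [slope_def_field] using hline.le_slope_of_hasDerivAt (mem_univ 0) (mem_univ 1) one_pos
    (hasDerivAt_comp_lineMap_of_hasGradientAt hgrad x y 0)

lemma le_add_inner_gradient_add_sq {L : ℝ} (hgrad : ∀ x, HasGradientAt g (g' x) x)
    (hgLip : ∀ x y, ‖g' x - g' y‖ ≤ L * ‖x - y‖) (x y : E) :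
    g y ≤ g x + ⟪g' x, y - x⟫_ℝ + L / 2 * ‖y - x‖ ^ 2 := by
  set A := ⟪g' x, y - x⟫_ℝ
  set r := ‖y - x‖
  have hφ := hasDerivAt_comp_lineMap_of_hasGradientAt hgrad x y
  have hB : ∀ t, HasDerivAt (fun t => g x + t * A + L / 2 * t ^ 2 * r ^ 2)
      (A + L * t * r ^ 2) t := fun t =>
    ((((hasDerivAt_id t).mul_const A).const_add (g x)).add
      (((hasDerivAt_pow 2 t).const_mul (L / 2)).mul_const (r ^ 2))).congr_deriv (by push_cast; ring)
  have hderiv : ∀ t ∈ Ico (0 : ℝ) 1, ⟪g' (lineMap x y t), y - x⟫_ℝ ≤ A + L * t * r ^ 2 := by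
    rintro t ⟨ht0, -⟩
    have hlip : ‖g' (lineMap x y t) - g' x‖ ≤ L * t * r := by
      simpa [lineMap_apply_module', norm_smul, abs_of_nonneg ht0, mul_assoc]
        using hgLip (lineMap x y t) x
    calc ⟪g' (lineMap x y t), y - x⟫_ℝ = A + ⟪g' (lineMap x y t) - g' x, y - x⟫_ℝ := by
          rw [inner_sub_left]; ring
      _ ≤ A + ‖g' (lineMap x y t) - g' x‖ * r := by gcongr; exact real_inner_le_norm _ _
      _ ≤ A + L * t * r * r := by gcongr
      _ = A + L * t * r ^ 2 := by ring
  have hfence := image_le_of_deriv_right_le_deriv_boundary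
    (fun t _ => (hφ t).continuousAt.continuousWithinAt) (fun t _ => (hφ t).hasDerivWithinAt)
    (by simp) (fun t _ => (hB t).continuousAt.continuousWithinAt)
    (fun t _ => (hB t).hasDerivWithinAt) hderiv (right_mem_Icc.2 zero_le_one)
  simpa using hfence

lemma ConvexOn.add_inner_gradient_add_sq_le {L : ℝ} (hL : 0 < L) (hgconv : ConvexOn ℝ univ g)
    (hgrad : ∀ x, HasGradientAt g (g' x) x) (hgLip : ∀ x y, ‖g' x - g' y‖ ≤ L * ‖x - y‖)
    (x y : E) : g x + ⟪g' x, y - x⟫_ℝ + 1 / (2 * L) * ‖g' y - g' x‖ ^ 2 ≤ g y := by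
  set w := g' y - g' x
  -- `z` is the step of length `1 / L` from `y` along `-∇(g - ⟪g' x, ·⟫)`, a function minimal at `x`
  set z := y - L⁻¹ • w
  have hconv := hgconv.inner_gradient_le_sub hgrad x z
  have hdesc := le_add_inner_gradient_add_sq hgrad hgLip y z
  rw [show z - x = (y - x) - L⁻¹ • w by simp only [z]; abel, inner_sub_right,
    real_inner_smul_right] at hconv
  rw [show z - y = -(L⁻¹ • w) by simp only [z]; abel, inner_neg_right, real_inner_smul_right,
    norm_neg, norm_smul, Real.norm_of_nonneg (inv_nonneg.2 hL.le)] at hdesc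
  have hw : L⁻¹ * ⟪g' y, w⟫_ℝ - L⁻¹ * ⟪g' x, w⟫_ℝ = L⁻¹ * ‖w‖ ^ 2 := by
    rw [← mul_sub, ← inner_sub_left, real_inner_self_eq_norm_sq]
  have hsq : L / 2 * (L⁻¹ * ‖w‖) ^ 2 = L⁻¹ * ‖w‖ ^ 2 - 1 / (2 * L) * ‖w‖ ^ 2 := by
    field_simp; ring
  linarith

lemma ConvexOn.cocoerciveWith_gradient {L : ℝ} (hL : 0 < L) (hgconv : ConvexOn ℝ univ g)
    (hgrad : ∀ x, HasGradientAt g (g' x) x) (hgLip : ∀ x y, ‖g' x - g' y‖ ≤ L * ‖x - y‖) :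
    CocoerciveWith L g' := fun x y => by
  have hxy := hgconv.add_inner_gradient_add_sq_le hL hgrad hgLip x y
  have hyx := hgconv.add_inner_gradient_add_sq_le hL hgrad hgLip y x
  have hinner : ⟪g' x, y - x⟫_ℝ + ⟪g' y, x - y⟫_ℝ = -⟪g' x - g' y, x - y⟫_ℝ := by
    rw [inner_sub_left, ← neg_sub x y, inner_neg_right]; ring
  rw [norm_sub_rev] at hxy
  have hhalf : ‖g' x - g' y‖ ^ 2 / L = 1 / (2 * L) * ‖g' x - g' y‖ ^ 2 * 2 := by ring
  exact (div_le_iff₀' hL).1 (by linarith)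

end Gradient

lemma sum_range_le_of_le_sub_add {a b : ℕ → ℝ} {c : ℝ} (h : ∀ k, a (k + 1) ≤ a k - b k + c)
    (t : ℕ) : ∑ i ∈ range t, b i ≤ a 0 - a t + t * c := by
  calc ∑ i ∈ range t, b i ≤ ∑ i ∈ range t, ((a i - a (i + 1)) + c) :=
        sum_le_sum fun i _ => by linarith [h i]
    _ = a 0 - a t + t * c := by
        rw [sum_add_distrib, sum_range_sub', sum_const, card_range, nsmul_eq_mul]

lemma inf'_range_le_average {f : ℕ → ℝ} {t : ℕ} (ht : (range t).Nonempty) :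
    (range t).inf' ht f ≤ 1 / (t : ℝ) * ∑ i ∈ range t, f i := by
  have := le_expect (a := (range t).inf' ht f) ht fun i hi => inf'_le f hi
  rwa [expect_eq_sum_div_card, card_range, ← one_div_mul_eq_div] at this

section InexactGradientStep

variable {E : Type*} [NormedAddCommGroup E] [InnerProductSpace ℝ E]
  {T : E → E} {K γ : ℝ} {z : E}

lemma CocoerciveWith.norm_sub_smul_sub_sq_le (hT : CocoerciveWith K T) (hK : 0 < K)
    (hz : T z = 0) (hγ0 : 0 ≤ γ) (hγ : γ ≤ 1 / K) (x : E) :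
    ‖x - γ • T x - z‖ ^ 2 ≤ ‖x - z‖ ^ 2 - γ / K * ‖T x‖ ^ 2 := by
  have hco : ‖T x‖ ^ 2 / K ≤ ⟪T x, x - z⟫_ℝ :=
    (div_le_iff₀' hK).2 (by simpa [hz] using hT x z)
  have h₁ := mul_le_mul_of_nonneg_left hco hγ0
  have h₂ := mul_le_mul_of_nonneg_right (mul_le_mul_of_nonneg_left hγ hγ0) (sq_nonneg ‖T x‖)
  rw [sub_right_comm, norm_sub_sq_real, real_inner_smul_right, norm_smul,
    Real.norm_of_nonneg hγ0, real_inner_comm]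
  linear_combination 2 * h₁ + h₂

lemma CocoerciveWith.norm_sub_smul_add_sub_sq_le (hT : CocoerciveWith K T) (hK : 0 < K)
    (hz : T z = 0) (hγ0 : 0 ≤ γ) (hγ : γ ≤ 1 / K) {x e : E} {s R : ℝ} (he : ‖e‖ ≤ s)
    (hx : ‖x - z‖ ≤ R) :
    ‖x - γ • (T x + e) - z‖ ^ 2
      ≤ ‖x - z‖ ^ 2 - γ / K * ‖T x‖ ^ 2 + (2 * γ * s * R + (γ * s) ^ 2) := by
  set a := x - γ • T x - z
  have hexact : ‖a‖ ^ 2 ≤ ‖x - z‖ ^ 2 - γ / K * ‖T x‖ ^ 2 :=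
    hT.norm_sub_smul_sub_sq_le hK hz hγ0 hγ x
  have ha : ‖a‖ ≤ R := by
    refine le_trans ((sq_le_sq₀ (norm_nonneg _) (norm_nonneg _)).1 (hexact.trans ?_)) hx
    exact sub_le_self _ (mul_nonneg (div_nonneg hγ0 hK.le) (sq_nonneg _))
  have hγe : ‖γ • e‖ ≤ γ * s := by
    rw [norm_smul, Real.norm_of_nonneg hγ0]; gcongr
  have hγs : 0 ≤ γ * s := (norm_nonneg _).trans hγe
  rw [show x - γ • (T x + e) - z = a - γ • e by simp only [a, smul_add]; abel]
  calc ‖a - γ • e‖ ^ 2 ≤ (‖a‖ + ‖γ • e‖) ^ 2 := by gcongr; exact norm_sub_le _ _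
    _ = ‖a‖ ^ 2 + 2 * ‖γ • e‖ * ‖a‖ + ‖γ • e‖ ^ 2 := by ring
    _ ≤ ‖a‖ ^ 2 + 2 * (γ * s) * R + (γ * s) ^ 2 := by gcongr
    _ ≤ _ := by linarith

lemma CocoerciveWith.sum_range_norm_sq_le (hT : CocoerciveWith K T) (hK : 0 < K)
    (hz : T z = 0) (hγ0 : 0 < γ) (hγ : γ ≤ 1 / K) {xs e : ℕ → E} {s R : ℝ}
    (hiter : ∀ k, xs (k + 1) = xs k - γ • (T (xs k) + e k)) (he : ∀ k, ‖e k‖ ≤ s)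
    (hbound : ∀ k, ‖xs k - z‖ ≤ R) (t : ℕ) :
    ∑ i ∈ range t, ‖T (xs i)‖ ^ 2 ≤ K * R ^ 2 / γ + t * (K * s * (2 * R + γ * s)) := by
  have hdesc : ∀ k, ‖xs (k + 1) - z‖ ^ 2
      ≤ ‖xs k - z‖ ^ 2 - γ / K * ‖T (xs k)‖ ^ 2 + (2 * γ * s * R + (γ * s) ^ 2) := fun k => by
    rw [hiter]
    exact hT.norm_sub_smul_add_sub_sq_le hK hz hγ0.le hγ (he k) (hbound k)
  have hsum := sum_range_le_of_le_sub_add (a := fun k => ‖xs k - z‖ ^ 2)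
    (b := fun k => γ / K * ‖T (xs k)‖ ^ 2) hdesc t
  rw [← mul_sum] at hsum
  have hstart : ‖xs 0 - z‖ ^ 2 ≤ R ^ 2 := by gcongr; exact hbound 0
  calc ∑ i ∈ range t, ‖T (xs i)‖ ^ 2 = K / γ * (γ / K * ∑ i ∈ range t, ‖T (xs i)‖ ^ 2) := by
        field_simp
    _ ≤ K / γ * (R ^ 2 + t * (2 * γ * s * R + (γ * s) ^ 2)) := by
        gcongr
        linarith [sq_nonneg ‖xs t - z‖]
    _ = K * R ^ 2 / γ + t * (K * s * (2 * R + γ * s)) := by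
        field_simp

end InexactGradientStep

theorem sdred_nonexpansive_error_bound_general {n : ℕ}
    (g : EuclideanSpace ℝ (Fin n) → ℝ)
    (g' D Dh G Gh : EuclideanSpace ℝ (Fin n) → EuclideanSpace ℝ (Fin n))
    (L σ ε τ γ R : ℝ)
    (hL : 0 < L)
    (hgconv : ConvexOn ℝ Set.univ g)
    (hgrad : ∀ x, HasGradientAt g (g' x) x)
    (hgLip : ∀ x y, ‖g' x - g' y‖ ≤ L * ‖x - y‖)
    (hD : ∀ x y, ‖D x - D y‖ ≤ ‖x - y‖)
    (hmis : ∀ x, ‖Dh x - D x‖ ≤ σ * ε)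
    (hτ : 0 < τ)
    (hG : ∀ x, G x = g' x + τ • (x - D x))
    (hGh : ∀ x, Gh x = g' x + τ • (x - Dh x))
    (xs : ℕ → EuclideanSpace ℝ (Fin n))
    (hiter : ∀ k, xs (k + 1) = xs k - γ • Gh (xs k))
    (hγ0 : 0 < γ) (hγ : γ < 1 / (L + 2 * τ))
    (xstar : EuclideanSpace ℝ (Fin n)) (hstar : G xstar = 0)
    (hbound : ∀ k : ℕ, ‖xs k - xstar‖ ≤ R) :
    ∀ t : ℕ, ∀ ht : 1 ≤ t,
      (Finset.range t).inf'
          (Finset.nonempty_range_iff.mpr (Nat.one_le_iff_ne_zero.mp ht))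
          (fun i => ‖G (xs i)‖ ^ 2)
        ≤ (1 / (t : ℝ)) * ∑ i ∈ Finset.range t, ‖G (xs i)‖ ^ 2 ∧
      (1 / (t : ℝ)) * ∑ i ∈ Finset.range t, ‖G (xs i)‖ ^ 2
        ≤ ((L + 2 * τ) * R ^ 2 / γ) / (t : ℝ)
            + τ * σ * ε * ((L + 2 * τ) * (2 * R + γ * τ * σ * ε)) := by
  intro t ht
  have hM : 0 < L + 2 * τ := by positivity
  have hGcoco : CocoerciveWith (L + 2 * τ) G := by
    rw [show G = fun x => g' x + τ • (x - D x) from funext hG]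
    exact (hgconv.cocoerciveWith_gradient hL hgrad hgLip).add
      ((cocoerciveWith_two_sub_of_nonexpansive hD).const_smul τ) hL (by positivity)
  have hiter' : ∀ k, xs (k + 1) = xs k - γ • (G (xs k) + τ • (D (xs k) - Dh (xs k))) :=
    fun k => by rw [hiter, hG, hGh]; module
  have herr : ∀ k, ‖τ • (D (xs k) - Dh (xs k))‖ ≤ τ * σ * ε := fun k => by
    rw [norm_smul, Real.norm_of_nonneg hτ.le, norm_sub_rev, mul_assoc]
    exact mul_le_mul_of_nonneg_left (hmis _) hτ.le
  have hsum := hGcoco.sum_range_norm_sq_le hM hstar hγ0 hγ.le hiter' herr hbound t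
  refine ⟨inf'_range_le_average _, ?_⟩
  have htpos : (0 : ℝ) < t := by exact_mod_cast ht
  calc 1 / (t : ℝ) * ∑ i ∈ range t, ‖G (xs i)‖ ^ 2
      ≤ 1 / t * ((L + 2 * τ) * R ^ 2 / γ
        + t * ((L + 2 * τ) * (τ * σ * ε) * (2 * R + γ * (τ * σ * ε)))) := by gcongr
    _ = _ := by field_simp

/-- SD-RED with a mismatched prior under a nonexpansive true prior (Theorem 2):
the running minimum/average of `‖G(xᵏ)‖²` is bounded by `B₁/t + τσε·B₂`. -/
theorem sdred_nonexpansive_error_bound {n : ℕ}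
    (g : EuclideanSpace ℝ (Fin n) → ℝ)
    (g' D Dh G Gh : EuclideanSpace ℝ (Fin n) → EuclideanSpace ℝ (Fin n))
    (L σ ε τ γ R : ℝ)
    (hL : 0 < L)
    (hgconv : ConvexOn ℝ Set.univ g)
    (hgrad : ∀ x, HasGradientAt g (g' x) x)
    (hgLip : ∀ x y, ‖g' x - g' y‖ ≤ L * ‖x - y‖)
    (hD : ∀ x y, ‖D x - D y‖ ≤ ‖x - y‖)
    (hσ : 0 < σ) (hε : 0 < ε)
    (hmis : ∀ x, ‖Dh x - D x‖ ≤ σ * ε)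
    (hτ : 0 < τ)
    (hG : ∀ x, G x = g' x + τ • (x - D x))
    (hGh : ∀ x, Gh x = g' x + τ • (x - Dh x))
    (xs : ℕ → EuclideanSpace ℝ (Fin n))
    (hiter : ∀ k, xs (k + 1) = xs k - γ • Gh (xs k))
    (hγ0 : 0 < γ) (hγ : γ < 1 / (L + 2 * τ))
    (xstar : EuclideanSpace ℝ (Fin n)) (hstar : G xstar = 0)
    (hR : 0 < R) (hbound : ∀ k : ℕ, ‖xs k - xstar‖ ≤ R) :
    ∀ t : ℕ, ∀ ht : 1 ≤ t,
      (Finset.range t).inf'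
          (Finset.nonempty_range_iff.mpr (Nat.one_le_iff_ne_zero.mp ht))
          (fun i => ‖G (xs i)‖ ^ 2)
        ≤ (1 / (t : ℝ)) * ∑ i ∈ Finset.range t, ‖G (xs i)‖ ^ 2 ∧
      (1 / (t : ℝ)) * ∑ i ∈ Finset.range t, ‖G (xs i)‖ ^ 2
        ≤ ((L + 2 * τ) * R ^ 2 / γ) / (t : ℝ)
            + τ * σ * ε * ((L + 2 * τ) * (2 * R + γ * τ * σ * ε)) :=
  sdred_nonexpansive_error_bound_general g g' D Dh G Gh L σ ε τ γ R hL hgconv hgrad hgLip hD hmis hτ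
    hG hGh xs hiter hγ0 hγ xstar hstar hbound
end

section
/- Assume D is nonexpansive (λ = 1) and 0 < γ ≤ 1/(L+2τ). Let x* ∈ E satisfy G(x*) = 0, let R > 0, and let x ∈ E satisfy ‖x − x*‖ ≤ R. Then ‖x − γ·Ĝ(x) − x*‖² ≤ ‖x − x*‖² − (γ/(L+2τ))·‖G(x)‖² + 2γτσεR + γ²τ²σ²ε². -/
/-!
The true operator `G = ∇g + τ (I - D)` is `1 / (L + 2τ)`-cocoercive: `∇g` is `1 / L`-cocoercive
by the Baillon–Haddad theorem, `I - D` is `1 / 2`-cocoercive because `D` is nonexpansive, and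
cocoercivity moduli combine harmonically under sums. A gradient step of length
`γ ≤ 1 / (L + 2τ)` on a cocoercive operator decreases the squared distance to its zero `x*` by
`γ / (L + 2τ) ‖G x‖²`, and in particular lands within `R` of `x*`. The mismatched step differs from
it by `γ τ (D x - D̂ x)`, of norm at most `γ τ σ ε`, and expanding the square of the perturbed
distance produces the two error terms.
-/

open Set NNReal
open AffineMap (lineMap lineMap_apply lineMap_apply_zero lineMap_apply_one hasDerivAt_lineMap)
open scoped RealInnerProductSpace

variable {E : Type*} [NormedAddCommGroup E] [InnerProductSpace ℝ E]

def Cocoercive (β : ℝ) (T : E → E) : Prop :=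
  ∀ x y, β * ‖T x - T y‖ ^ 2 ≤ ⟪T x - T y, x - y⟫

namespace Cocoercive

theorem smul {β c : ℝ} {T : E → E} (hT : Cocoercive β T) (hc : 0 < c) :
    Cocoercive (β / c) (c • T) := by
  intro x y
  simp only [Pi.smul_apply, ← smul_sub, norm_smul, Real.norm_of_nonneg hc.le,
    real_inner_smul_left]
  rw [show β / c * (c * ‖T x - T y‖) ^ 2 = c * (β * ‖T x - T y‖ ^ 2) by field_simp]
  exact mul_le_mul_of_nonneg_left (hT x y) hc.le

theorem add {β₁ β₂ : ℝ} {A B : E → E} (hA : Cocoercive β₁ A) (hB : Cocoercive β₂ B)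
    (hβ₁ : 0 < β₁) (hβ₂ : 0 < β₂) : Cocoercive (β₁⁻¹ + β₂⁻¹)⁻¹ (A + B) := by
  intro x y
  rw [Pi.add_apply, Pi.add_apply, add_sub_add_comm, inner_add_left,
    inv_mul_le_iff₀ (by positivity)]
  set a := A x - A y
  set b := B x - B y
  have hCauchySchwarz :
      (‖a‖ + ‖b‖) ^ 2 ≤ (β₁⁻¹ + β₂⁻¹) * (β₁ * ‖a‖ ^ 2 + β₂ * ‖b‖ ^ 2) := by
    field_simp
    nlinarith [sq_nonneg (β₁ * ‖a‖ - β₂ * ‖b‖)]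
  calc ‖a + b‖ ^ 2 ≤ (‖a‖ + ‖b‖) ^ 2 := by gcongr; exact norm_add_le a b
    _ ≤ (β₁⁻¹ + β₂⁻¹) * (β₁ * ‖a‖ ^ 2 + β₂ * ‖b‖ ^ 2) := hCauchySchwarz
    _ ≤ (β₁⁻¹ + β₂⁻¹) * (⟪a, x - y⟫ + ⟪b, x - y⟫) := by gcongr; exacts [hA x y, hB x y]

theorem norm_sub_smul_sub_sq_le {β γ : ℝ} {T : E → E} (hT : Cocoercive β T)
    (hγ0 : 0 ≤ γ) (hγ : γ ≤ β) {z : E} (hz : T z = 0) (x : E) :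
    ‖x - γ • T x - z‖ ^ 2 ≤ ‖x - z‖ ^ 2 - γ * β * ‖T x‖ ^ 2 := by
  have hTx := hT x z
  rw [hz, sub_zero] at hTx
  rw [show x - γ • T x - z = (x - z) - γ • T x by abel, norm_sub_sq_real, real_inner_smul_right,
    norm_smul, Real.norm_of_nonneg hγ0, real_inner_comm]
  nlinarith [mul_le_mul_of_nonneg_right (mul_le_mul_of_nonneg_left hγ hγ0) (sq_nonneg ‖T x‖)]

theorem norm_sub_smul_sub_le {β γ : ℝ} {T : E → E} (hT : Cocoercive β T)
    (hγ0 : 0 ≤ γ) (hγ : γ ≤ β) {z : E} (hz : T z = 0) (x : E) :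
    ‖x - γ • T x - z‖ ≤ ‖x - z‖ := by
  refine (pow_le_pow_iff_left₀ (norm_nonneg _) (norm_nonneg _) two_ne_zero).1 ?_
  have := hT.norm_sub_smul_sub_sq_le hγ0 hγ hz x
  have : 0 ≤ γ * β * ‖T x‖ ^ 2 := by have := hγ0.trans hγ; positivity
  linarith

end Cocoercive

theorem norm_sub_smul_sq_le {y e : E} {γ δ R : ℝ} (hγ : 0 ≤ γ) (hy : ‖y‖ ≤ R) (he : ‖e‖ ≤ δ) :
    ‖y - γ • e‖ ^ 2 ≤ ‖y‖ ^ 2 + 2 * γ * δ * R + γ ^ 2 * δ ^ 2 := by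
  have hδ : 0 ≤ δ := (norm_nonneg e).trans he
  calc ‖y - γ • e‖ ^ 2 ≤ (‖y‖ + γ * δ) ^ 2 := by
        gcongr
        refine (norm_sub_le _ _).trans ?_
        rw [norm_smul, Real.norm_of_nonneg hγ]
        gcongr
    _ ≤ ‖y‖ ^ 2 + 2 * γ * δ * R + γ ^ 2 * δ ^ 2 := by
      nlinarith [mul_le_mul_of_nonneg_left hy (by positivity : 0 ≤ 2 * γ * δ)]

theorem LipschitzWith.cocoercive_id_sub {D : E → E} (hD : LipschitzWith 1 D) :
    Cocoercive 2⁻¹ (id - D) := by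
  intro x y
  have hd : ‖D x - D y‖ ≤ ‖x - y‖ := by simpa only [coe_one, one_mul] using hD.norm_sub_le x y
  rw [Pi.sub_apply, Pi.sub_apply, id, id, sub_sub_sub_comm, norm_sub_sq_real,
    inner_sub_left (x - y) (D x - D y), real_inner_self_eq_norm_sq, real_inner_comm (D x - D y)]
  nlinarith [norm_nonneg (D x - D y), norm_nonneg (x - y)]

section Gradient

variable [CompleteSpace E] {g : E → ℝ}

theorem HasGradientAt.hasDerivAt_comp_lineMap {g'z x y : E} {t : ℝ}
    (hg : HasGradientAt g g'z (lineMap x y t)) :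
    HasDerivAt (g ∘ lineMap (k := ℝ) x y) ⟪g'z, y - x⟫ t := by
  simpa only [InnerProductSpace.toDual_apply_apply] using
    hg.hasFDerivAt.comp_hasDerivAt t hasDerivAt_lineMap

theorem ConvexOn.add_inner_le_of_hasGradientAt {s : Set E} {g'x x y : E}
    (hg : ConvexOn ℝ s g) (hx : x ∈ s) (hy : y ∈ s) (hgx : HasGradientAt g g'x x) :
    g x + ⟪g'x, y - x⟫ ≤ g y := by
  have hd : HasDerivAt (g ∘ lineMap (k := ℝ) x y) ⟪g'x, y - x⟫ 0 :=
    HasGradientAt.hasDerivAt_comp_lineMap (by rwa [lineMap_apply_zero])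
  have := (hg.comp_affineMap (lineMap x y)).le_slope_of_hasDerivAt
    (by simpa using hx) (by simpa using hy) one_pos hd
  simp only [slope_def_field, Function.comp_apply, lineMap_apply_one,
    lineMap_apply_zero, sub_zero, div_one] at this
  linarith

variable {g' : E → E} {K : ℝ≥0}

theorem LipschitzWith.le_add_inner_add_sq_of_hasGradientAt
    (hgrad : ∀ z, HasGradientAt g (g' z) z) (hK : LipschitzWith K g') (x y : E) :
    g y ≤ g x + ⟪g' x, y - x⟫ + K / 2 * ‖y - x‖ ^ 2 := by
  set v := y - x
  let gap : ℝ → ℝ := fun t ↦ t * ⟪g' x, v⟫ + K / 2 * t ^ 2 * ‖v‖ ^ 2 - (g ∘ lineMap x y) t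
  have hgap (t : ℝ) :
      HasDerivAt gap (⟪g' x, v⟫ + K * t * ‖v‖ ^ 2 - ⟪g' (lineMap x y t), v⟫) t := by
    refine ((((hasDerivAt_id t).mul_const ⟪g' x, v⟫).add
      (((hasDerivAt_pow 2 t).const_mul (K / 2 : ℝ)).mul_const (‖v‖ ^ 2))).sub
      (hgrad (lineMap x y t)).hasDerivAt_comp_lineMap).congr_deriv ?_
    simp only [one_mul, Nat.cast_ofNat, Nat.add_one_sub_one, pow_one]; ring
  have hslope (t : ℝ) (ht : 0 ≤ t) : ⟪g' (lineMap x y t) - g' x, v⟫ ≤ K * t * ‖v‖ ^ 2 :=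
    calc ⟪g' (lineMap x y t) - g' x, v⟫ ≤ ‖g' (lineMap x y t) - g' x‖ * ‖v‖ :=
          real_inner_le_norm _ _
      _ ≤ K * ‖lineMap x y t - x‖ * ‖v‖ := by gcongr; exact hK.norm_sub_le _ _
      _ = K * t * ‖v‖ ^ 2 := by
          rw [lineMap_apply, vadd_eq_add, add_sub_cancel_right, norm_smul,
            Real.norm_of_nonneg ht, vsub_eq_sub]; ring
  have hmono : MonotoneOn gap (Ici 0) :=
    monotoneOn_of_hasDerivWithinAt_nonneg (convex_Ici 0)
      (fun t _ ↦ (hgap t).continuousAt.continuousWithinAt) (fun t _ ↦ (hgap t).hasDerivWithinAt)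
      fun t ht ↦ by
        rw [interior_Ici] at ht
        have := hslope t ht.le
        rw [inner_sub_left] at this
        linarith
  have := hmono self_mem_Ici (mem_Ici.2 zero_le_one) zero_le_one
  simp only [gap, Function.comp_apply, lineMap_apply_zero, lineMap_apply_one] at this
  linarith

theorem ConvexOn.add_inner_add_sq_norm_le (hK0 : 0 < K) (hg : ConvexOn ℝ univ g)
    (hgrad : ∀ z, HasGradientAt g (g' z) z) (hK : LipschitzWith K g') (x y : E) :
    g x + ⟪g' x, y - x⟫ + (2 * (K : ℝ))⁻¹ * ‖g' y - g' x‖ ^ 2 ≤ g y := by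
  set w := g' y - g' x
  -- compare the two bounds at the point a gradient step of length `1 / K` away from `y`
  set z := y - (K : ℝ)⁻¹ • w
  have hupper := hK.le_add_inner_add_sq_of_hasGradientAt hgrad y z
  have hlower := hg.add_inner_le_of_hasGradientAt (mem_univ x) (mem_univ z) (hgrad x)
  have hw : ⟪g' y, w⟫ - ⟪g' x, w⟫ = ‖w‖ ^ 2 := by
    rw [← inner_sub_left, real_inner_self_eq_norm_sq]
  rw [show z - y = -((K : ℝ)⁻¹ • w) by module, inner_neg_right, real_inner_smul_right, norm_neg,
    norm_smul, Real.norm_of_nonneg (by positivity)] at hupper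
  rw [show z - x = (y - x) - (K : ℝ)⁻¹ • w by module, inner_sub_right,
    real_inner_smul_right] at hlower
  have hquad : (K : ℝ) / 2 * ((K : ℝ)⁻¹ * ‖w‖) ^ 2 = (2 * (K : ℝ))⁻¹ * ‖w‖ ^ 2 := by
    field_simp
  linear_combination hupper + hlower - (K : ℝ)⁻¹ * hw + hquad

theorem ConvexOn.cocoercive_of_lipschitzWith_gradient (hK0 : 0 < K) (hg : ConvexOn ℝ univ g)
    (hgrad : ∀ z, HasGradientAt g (g' z) z) (hK : LipschitzWith K g') :
    Cocoercive (K : ℝ)⁻¹ g' := by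
  intro x y
  have hxy := hg.add_inner_add_sq_norm_le hK0 hgrad hK x y
  have hyx := hg.add_inner_add_sq_norm_le hK0 hgrad hK y x
  rw [norm_sub_rev] at hxy
  have hinner : ⟪g' x - g' y, x - y⟫ = -⟪g' x, y - x⟫ - ⟪g' y, x - y⟫ := by
    rw [inner_sub_left, ← inner_neg_right, neg_sub]
  rw [hinner]
  linear_combination hxy + hyx

end Gradient

theorem sdred_one_step_nonexpansive_general {n : ℕ}
    (g : EuclideanSpace ℝ (Fin n) → ℝ)
    (g' D Dh G Gh : EuclideanSpace ℝ (Fin n) → EuclideanSpace ℝ (Fin n))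
    (L σ ε τ γ R : ℝ)
    (hL : 0 < L)
    (hgconv : ConvexOn ℝ Set.univ g)
    (hgrad : ∀ x, HasGradientAt g (g' x) x)
    (hgLip : ∀ x y, ‖g' x - g' y‖ ≤ L * ‖x - y‖)
    (hD : ∀ x y, ‖D x - D y‖ ≤ ‖x - y‖)
    (hmis : ∀ x, ‖Dh x - D x‖ ≤ σ * ε)
    (hτ : 0 < τ)
    (hG : ∀ x, G x = g' x + τ • (x - D x))
    (hGh : ∀ x, Gh x = g' x + τ • (x - Dh x))
    (hγ0 : 0 < γ) (hγ : γ ≤ 1 / (L + 2 * τ))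
    (xstar : EuclideanSpace ℝ (Fin n)) (hstar : G xstar = 0)
    (x : EuclideanSpace ℝ (Fin n)) (hx : ‖x - xstar‖ ≤ R) :
    ‖x - γ • Gh x - xstar‖ ^ 2
      ≤ ‖x - xstar‖ ^ 2 - (γ / (L + 2 * τ)) * ‖G x‖ ^ 2
          + 2 * γ * τ * σ * ε * R + γ ^ 2 * τ ^ 2 * σ ^ 2 * ε ^ 2 := by
  lift L to ℝ≥0 using hL.le
  have hg'Lip : LipschitzWith L g' := .of_dist_le_mul fun x y ↦ by
    simpa only [dist_eq_norm] using hgLip x y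
  have hDLip : LipschitzWith 1 D := .of_dist_le_mul fun x y ↦ by
    simpa only [dist_eq_norm, NNReal.coe_one, one_mul] using hD x y
  have hGcoco : Cocoercive (L + 2 * τ)⁻¹ G := by
    have := (hgconv.cocoercive_of_lipschitzWith_gradient (mod_cast hL) hgrad hg'Lip).add
      (hDLip.cocoercive_id_sub.smul hτ) (by positivity) (by positivity)
    rwa [inv_inv, inv_div, div_inv_eq_mul, mul_comm τ 2,
      ← show G = g' + τ • (id - D) from funext hG] at this
  have hstep := hGcoco.norm_sub_smul_sub_sq_le hγ0.le (by rwa [← one_div]) hstar x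
  have hnonexp := hGcoco.norm_sub_smul_sub_le hγ0.le (by rwa [← one_div]) hstar x
  have herr : ‖Gh x - G x‖ ≤ τ * (σ * ε) := by
    rw [hG, hGh, show g' x + τ • (x - Dh x) - (g' x + τ • (x - D x)) = -(τ • (Dh x - D x)) by
      module, norm_neg, norm_smul, Real.norm_of_nonneg hτ.le]
    exact mul_le_mul_of_nonneg_left (hmis x) hτ.le
  calc ‖x - γ • Gh x - xstar‖ ^ 2 = ‖(x - γ • G x - xstar) - γ • (Gh x - G x)‖ ^ 2 := by
        congr 2; module
    _ ≤ ‖x - γ • G x - xstar‖ ^ 2 + 2 * γ * (τ * (σ * ε)) * R + γ ^ 2 * (τ * (σ * ε)) ^ 2 :=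
        norm_sub_smul_sq_le hγ0.le (hnonexp.trans hx) herr
    _ ≤ _ := by rw [div_eq_mul_inv]; linear_combination hstep

/-- One mismatched SD-RED step under a nonexpansive true prior: descent inequality
with an additive error `2γτσεR + γ²τ²σ²ε²`. -/
theorem sdred_one_step_nonexpansive {n : ℕ}
    (g : EuclideanSpace ℝ (Fin n) → ℝ)
    (g' D Dh G Gh : EuclideanSpace ℝ (Fin n) → EuclideanSpace ℝ (Fin n))
    (L σ ε τ γ R : ℝ)
    (hL : 0 < L)
    (hgconv : ConvexOn ℝ Set.univ g)
    (hgrad : ∀ x, HasGradientAt g (g' x) x)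
    (hgLip : ∀ x y, ‖g' x - g' y‖ ≤ L * ‖x - y‖)
    (hD : ∀ x y, ‖D x - D y‖ ≤ ‖x - y‖)
    (hσ : 0 < σ) (hε : 0 < ε)
    (hmis : ∀ x, ‖Dh x - D x‖ ≤ σ * ε)
    (hτ : 0 < τ)
    (hG : ∀ x, G x = g' x + τ • (x - D x))
    (hGh : ∀ x, Gh x = g' x + τ • (x - Dh x))
    (hγ0 : 0 < γ) (hγ : γ ≤ 1 / (L + 2 * τ))
    (xstar : EuclideanSpace ℝ (Fin n)) (hstar : G xstar = 0)
    (hR : 0 < R)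
    (x : EuclideanSpace ℝ (Fin n)) (hx : ‖x - xstar‖ ≤ R) :
    ‖x - γ • Gh x - xstar‖ ^ 2
      ≤ ‖x - xstar‖ ^ 2 - (γ / (L + 2 * τ)) * ‖G x‖ ^ 2
          + 2 * γ * τ * σ * ε * R + γ ^ 2 * τ ^ 2 * σ ^ 2 * ε ^ 2 :=
  sdred_one_step_nonexpansive_general g g' D Dh G Gh L σ ε τ γ R hL hgconv hgrad hgLip hD hmis hτ hG
    hGh hγ0 hγ xstar hstar x hx
end

section
/- Let p, p̂ : E → ℝ be continuous, everywhere strictly positive, log-concave densities, i.e. h := −log p and ĥ := −log p̂ are convex. Let σ > 0, ε > 0, and assume exp(−ε²/2) ≤ p(x)/p̂(x) ≤ exp(ε²/2) for all x ∈ E. Fix z ∈ E and suppose x* is a global minimizer over E of v ↦ (1/2)‖v − z‖² + σ²·h(v) (the MAP denoiser D_σ(z)) and x̂ is a global minimizer over E of v ↦ (1/2)‖v − z‖² + σ²·ĥ(v) (the MAP denoiser D̂_σ(z)). Then ‖x* − x̂‖ ≤ σε. -/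
open Real

lemma quad_growth {n : ℕ} (h : EuclideanSpace ℝ (Fin n) → ℝ)
    (hconv : ConvexOn ℝ Set.univ h) (c : ℝ) (hc : 0 ≤ c) (z x : EuclideanSpace ℝ (Fin n))
    (hmin : IsMinOn (fun v => (1 / 2) * ‖v - z‖ ^ 2 + c * h v) Set.univ x)
    (v : EuclideanSpace ℝ (Fin n)) :
    (1 / 2) * ‖x - z‖ ^ 2 + c * h x + (1 / 2) * ‖v - x‖ ^ 2
      ≤ (1 / 2) * ‖v - z‖ ^ 2 + c * h v := by
  set f : EuclideanSpace ℝ (Fin n) → ℝ := fun v => (1 / 2) * ‖v - z‖ ^ 2 + c * h v with hf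
  have hid : ∀ t : ℝ, ‖(1 - t) • x + t • v - z‖ ^ 2
      = (1 - t) * ‖x - z‖ ^ 2 + t * ‖v - z‖ ^ 2 - t * (1 - t) * ‖v - x‖ ^ 2 := by
    intro t
    have h1 : (1 - t) • x + t • v - z = (x - z) + t • (v - x) := by module
    have h2 : v - z = (x - z) + (v - x) := by abel
    have e1 := norm_add_sq_real (x - z) (t • (v - x))
    have e2 := norm_add_sq_real (x - z) (v - x)
    rw [real_inner_smul_right] at e1
    rw [norm_smul, Real.norm_eq_abs, mul_pow, sq_abs] at e1
    rw [h1, e1]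
    rw [h2, e2]
    ring
  have key : ∀ t : ℝ, t ∈ Set.Ioo (0:ℝ) 1 →
      f x + (1 - t) / 2 * ‖v - x‖ ^ 2 ≤ f v := by
    intro t ht
    have hconvy := hconv.2 (Set.mem_univ x) (Set.mem_univ v)
      (by linarith [ht.2] : (0:ℝ) ≤ 1 - t) (le_of_lt ht.1) (by ring)
    simp only [smul_eq_mul] at hconvy
    have hmint := hmin (Set.mem_univ ((1 - t) • x + t • v))
    simp only [hf, Set.mem_setOf_eq] at hmint ⊢
    have hb : (1 / 2 : ℝ) * ‖(1 - t) • x + t • v - z‖ ^ 2 + c * h ((1 - t) • x + t • v)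
        ≤ (1 - t) * ((1 / 2) * ‖x - z‖ ^ 2 + c * h x)
          + t * ((1 / 2) * ‖v - z‖ ^ 2 + c * h v) - t * (1 - t) / 2 * ‖v - x‖ ^ 2 := by
      have := mul_le_mul_of_nonneg_left hconvy hc
      rw [hid t]
      nlinarith [this]
    have ht0 := ht.1
    nlinarith [hmint, hb]
  have hnn : (0:ℝ) ≤ ‖v - x‖ ^ 2 := by positivity
  have : f x + (1 / 2) * ‖v - x‖ ^ 2 ≤ f v := by
    refine le_of_forall_pos_le_add fun δ hδ => ?_
    set t : ℝ := min (1/2) (δ / (‖v - x‖ ^ 2 + 1)) with htdef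
    have ht1 : t ∈ Set.Ioo (0:ℝ) 1 := by
      constructor
      · exact lt_min (by norm_num) (by positivity)
      · exact lt_of_le_of_lt (min_le_left _ _) (by norm_num)
    have hk := key t ht1
    have htle : t ≤ δ / (‖v - x‖ ^ 2 + 1) := min_le_right _ _
    have : t * ‖v - x‖ ^ 2 ≤ δ := by
      have h1 : t * (‖v - x‖ ^ 2 + 1) ≤ δ := by
        rw [← le_div_iff₀ (by positivity)]; exact htle
      nlinarith [ht1.1.le]
    nlinarith [hk]
  simpa [hf] using this

/-- Theorem 3: if the density ratio of two log-concave priors is bounded by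
`exp(±ε²/2)`, then the corresponding MAP denoisers are within `σε` of each other. -/
theorem map_denoisers_close_of_density_ratio_bound {n : ℕ}
    (p ph : EuclideanSpace ℝ (Fin n) → ℝ)
    (hpcont : Continuous p) (hphcont : Continuous ph)
    (hppos : ∀ x, 0 < p x) (hphpos : ∀ x, 0 < ph x)
    (hpconc : ConvexOn ℝ Set.univ (fun x => -Real.log (p x)))
    (hphconc : ConvexOn ℝ Set.univ (fun x => -Real.log (ph x)))
    (σ ε : ℝ) (hσ : 0 < σ) (hε : 0 < ε)
    (hratio : ∀ x, Real.exp (-ε ^ 2 / 2) ≤ p x / ph x ∧ p x / ph x ≤ Real.exp (ε ^ 2 / 2))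
    (z xstar xhat : EuclideanSpace ℝ (Fin n))
    (hmin : IsMinOn (fun v => (1 / 2) * ‖v - z‖ ^ 2 + σ ^ 2 * (-Real.log (p v)))
      Set.univ xstar)
    (hminh : IsMinOn (fun v => (1 / 2) * ‖v - z‖ ^ 2 + σ ^ 2 * (-Real.log (ph v)))
      Set.univ xhat) :
    ‖xstar - xhat‖ ≤ σ * ε := by
  have hc : (0:ℝ) ≤ σ ^ 2 := sq_nonneg σ
  have A := quad_growth _ hpconc _ hc z xstar hmin xhat
  have B := quad_growth _ hphconc _ hc z xhat hminh xstar
  -- log ratio bounds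
  have hlog : ∀ x : EuclideanSpace ℝ (Fin n),
      |Real.log (p x) - Real.log (ph x)| ≤ ε ^ 2 / 2 := by
    intro x
    have hr := hratio x
    have hq : Real.log (p x / ph x) = Real.log (p x) - Real.log (ph x) :=
      Real.log_div (hppos x).ne' (hphpos x).ne'
    have h1 : Real.log (p x / ph x) ≤ ε ^ 2 / 2 := by
      calc Real.log (p x / ph x) ≤ Real.log (Real.exp (ε ^ 2 / 2)) :=
            Real.log_le_log (div_pos (hppos x) (hphpos x)) hr.2
        _ = ε ^ 2 / 2 := Real.log_exp _
    have h2 : -(ε ^ 2 / 2) ≤ Real.log (p x / ph x) := by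
      calc -(ε ^ 2 / 2) = Real.log (Real.exp (-ε ^ 2 / 2)) := by rw [Real.log_exp]; ring
        _ ≤ Real.log (p x / ph x) := Real.log_le_log (Real.exp_pos _) hr.1
    rw [hq] at h1 h2
    rw [abs_le]; constructor <;> linarith
  have h1 := abs_le.1 (hlog xstar)
  have h2 := abs_le.1 (hlog xhat)
  have hdist : ‖xhat - xstar‖ = ‖xstar - xhat‖ := norm_sub_rev _ _
  rw [hdist] at A
  have hsq : ‖xstar - xhat‖ ^ 2 ≤ (σ * ε) ^ 2 := by nlinarith [A, B, h1.1, h1.2, h2.1, h2.2]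
  have := Real.sqrt_le_sqrt hsq
  rwa [Real.sqrt_sq (norm_nonneg _), Real.sqrt_sq (by positivity : (0:ℝ) ≤ σ * ε)] at this
end

section
/- Let h : E → ℝ be convex and continuous, let σ > 0 and τ = 1/σ², and define the Moreau envelope h_{σ²}(x) = inf_{v ∈ E} { (1/2)‖v − x‖² + σ²·h(v) } and the smoothed objective f_{σ²} = g + τ·h_{σ²}. Then f_{σ²} is convex and differentiable on E, its gradient satisfies ∇f_{σ²}(x) = ∇g(x) + τ·(x − prox_{σ²h}(x)) for all x ∈ E, and ∇f_{σ²} is Lipschitz continuous with constant L + 2τ. -/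
/-!
Minimality of `p = prox x` along the segment towards any `v` gives the variational inequality
`⟪x - p, v - p⟫ ≤ c (f v - f p)`; adding it at two points shows that `prox` is firmly
nonexpansive, so the residual `x ↦ x - prox x` is monotone and nonexpansive. The envelope `e` is
attained at `prox x`, so evaluating the objective of `y` at `prox x` and that of `x` at `prox y`
traps `e y - e x - ⟪x - prox x, y - x⟫` between `± ‖y - x‖² / 2`, which is differentiability
with gradient `x - prox x`. Convexity holds because `e` is a partial minimum of a jointly convex
function, and the Lipschitz bound follows from the triangle inequality.
-/

open Set Filter Topology Asymptotics RealInnerProductSpace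

section ConditionallyCompleteLinearOrder

variable {α ι : Type*} [ConditionallyCompleteLinearOrder α] {f : ι → α} {i₀ : ι}

theorem IsMinOn.ciInf_eq (h : IsMinOn f univ i₀) : ⨅ i, f i = f i₀ :=
  have : Nonempty ι := ⟨i₀⟩
  (IsLeast.isGLB ⟨mem_range_self i₀, forall_mem_range.2 fun i => h (mem_univ i)⟩).ciInf_eq

end ConditionallyCompleteLinearOrder

theorem convexOn_iInf_of_isMinOn {E V : Type*} [AddCommGroup E] [Module ℝ E] [AddCommGroup V]
    [Module ℝ V] {F : E × V → ℝ} (hF : ConvexOn ℝ univ F) {m : E → V}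
    (hm : ∀ x, IsMinOn (fun v => F (x, v)) univ (m x)) :
    ConvexOn ℝ univ fun x => ⨅ v, F (x, v) := by
  refine ⟨convex_univ, fun x₀ _ x₁ _ a b ha hb hab => ?_⟩
  simp only [fun x => (hm x).ciInf_eq]
  calc F (a • x₀ + b • x₁, m (a • x₀ + b • x₁))
      ≤ F (a • (x₀, m x₀) + b • (x₁, m x₁)) := hm _ (mem_univ (a • m x₀ + b • m x₁))
    _ ≤ a • F (x₀, m x₀) + b • F (x₁, m x₁) := hF.2 (mem_univ _) (mem_univ _) ha hb hab

section Moreau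

variable {E : Type*} [NormedAddCommGroup E]

noncomputable def moreauEnvelope (f : E → ℝ) (c : ℝ) (x : E) : ℝ :=
  ⨅ v, 1 / 2 * ‖v - x‖ ^ 2 + c * f v

def IsProxMap (f : E → ℝ) (c : ℝ) (prox : E → E) : Prop :=
  ∀ x, IsMinOn (fun v => 1 / 2 * ‖v - x‖ ^ 2 + c * f v) univ (prox x)

theorem IsProxMap.moreauEnvelope_eq {f : E → ℝ} {c : ℝ} {prox : E → E}
    (hprox : IsProxMap f c prox) (x : E) :
    moreauEnvelope f c x = 1 / 2 * ‖prox x - x‖ ^ 2 + c * f (prox x) :=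
  (hprox x).ciInf_eq

end Moreau

section InnerProductSpace

variable {E : Type*} [NormedAddCommGroup E] [InnerProductSpace ℝ E]

theorem norm_le_norm_add_of_inner_nonneg {r s : E} (h : 0 ≤ ⟪r, s⟫) : ‖r‖ ≤ ‖r + s‖ := by
  nlinarith [norm_add_sq_real r s, norm_nonneg r, norm_nonneg (r + s), sq_nonneg ‖s‖]

theorem HasGradientAt.add_const_mul [CompleteSpace E] {f g : E → ℝ} {f' g' x : E}
    (hf : HasGradientAt f f' x) (hg : HasGradientAt g g' x) (c : ℝ) :
    HasGradientAt (fun y => f y + c * g y) (f' + c • g') x := by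
  rw [hasGradientAt_iff_hasFDerivAt, map_add, map_smul]
  exact hf.hasFDerivAt.add (hg.hasFDerivAt.const_mul c)

theorem hasGradientAt_of_abs_sub_inner_le [CompleteSpace E] {f : E → ℝ} {f' x : E} {C : ℝ}
    (h : ∀ y, |f y - f x - ⟪f', y - x⟫| ≤ C * ‖y - x‖ ^ 2) : HasGradientAt f f' x := by
  rw [hasGradientAt_iff_isLittleO]
  refine (IsBigO.of_bound C (Eventually.of_forall fun y => ?_)).trans_isLittleO
    (isLittleO_pow_sub_sub x one_lt_two)
  simpa only [Real.norm_eq_abs, norm_pow, abs_norm] using h y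

variable {f : E → ℝ} {c : ℝ}

theorem inner_sub_le_of_isMinOn {x p : E} (hf : ConvexOn ℝ univ f) (hc : 0 ≤ c)
    (hp : IsMinOn (fun v => 1 / 2 * ‖v - x‖ ^ 2 + c * f v) univ p) (v : E) :
    ⟪x - p, v - p⟫ ≤ c * (f v - f p) := by
  have step : ∀ t ∈ Ioc (0 : ℝ) 1, ⟪x - p, v - p⟫ ≤ t / 2 * ‖v - p‖ ^ 2 + c * (f v - f p) := by
    rintro t ⟨ht0, ht1⟩
    have hmin : 1 / 2 * ‖p - x‖ ^ 2 + c * f p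
        ≤ 1 / 2 * ‖(1 - t) • p + t • v - x‖ ^ 2 + c * f ((1 - t) • p + t • v) :=
      hp (mem_univ _)
    have hconv : f ((1 - t) • p + t • v) ≤ (1 - t) * f p + t * f v :=
      hf.2 (mem_univ p) (mem_univ v) (sub_nonneg.2 ht1) ht0.le (sub_add_cancel 1 t)
    have hsq : ‖(1 - t) • p + t • v - x‖ ^ 2
        = ‖p - x‖ ^ 2 - 2 * t * ⟪x - p, v - p⟫ + t ^ 2 * ‖v - p‖ ^ 2 := by
      rw [show (1 - t) • p + t • v - x = (p - x) + t • (v - p) by module, norm_add_sq_real,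
        real_inner_smul_right, norm_smul, mul_pow, Real.norm_eq_abs, sq_abs,
        ← neg_sub x p, inner_neg_left]
      ring
    refine le_of_mul_le_mul_left ?_ ht0
    nlinarith [mul_le_mul_of_nonneg_left hconv hc]
  have hlim : Tendsto (fun t : ℝ => t / 2 * ‖v - p‖ ^ 2 + c * (f v - f p)) (𝓝[>] 0)
      (𝓝 (c * (f v - f p))) := by
    refine tendsto_nhdsWithin_of_tendsto_nhds (Continuous.tendsto' ?_ 0 _ (by simp))
    fun_prop
  exact ge_of_tendsto hlim (mem_of_superset (Ioc_mem_nhdsGT one_pos) step)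

theorem ConvexOn.convexOn_proxObjective (hf : ConvexOn ℝ univ f) (hc : 0 ≤ c) :
    ConvexOn ℝ univ fun z : E × E => 1 / 2 * ‖z.2 - z.1‖ ^ 2 + c * f z.2 := by
  have hsq := (convexOn_univ_norm.pow (fun _ _ => norm_nonneg _) 2).comp_linearMap
    (LinearMap.snd ℝ E E - LinearMap.fst ℝ E E)
  exact (hsq.smul (by norm_num : (0 : ℝ) ≤ 1 / 2)).add
    ((hf.comp_linearMap (LinearMap.snd ℝ E E)).smul hc)

namespace IsProxMap

variable {prox : E → E}

theorem convexOn_moreauEnvelope (hf : ConvexOn ℝ univ f) (hc : 0 ≤ c) (hprox : IsProxMap f c prox) :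
    ConvexOn ℝ univ (moreauEnvelope f c) :=
  convexOn_iInf_of_isMinOn (hf.convexOn_proxObjective hc) hprox

theorem inner_sub_prox_sub_prox_nonneg (hf : ConvexOn ℝ univ f) (hc : 0 ≤ c)
    (hprox : IsProxMap f c prox) (x y : E) :
    0 ≤ ⟪(x - prox x) - (y - prox y), prox x - prox y⟫ := by
  have hx := inner_sub_le_of_isMinOn hf hc (hprox x) (prox y)
  have hy := inner_sub_le_of_isMinOn hf hc (hprox y) (prox x)
  rw [← neg_sub (prox x) (prox y), inner_neg_right] at hx
  rw [inner_sub_left]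
  linarith

theorem inner_sub_prox_sub_nonneg (hf : ConvexOn ℝ univ f) (hc : 0 ≤ c) (hprox : IsProxMap f c prox)
    (x y : E) : 0 ≤ ⟪(x - prox x) - (y - prox y), x - y⟫ := by
  have hsplit : x - y = ((x - prox x) - (y - prox y)) + (prox x - prox y) := by abel
  rw [hsplit, inner_add_right, real_inner_self_eq_norm_sq]
  exact add_nonneg (sq_nonneg _) (hprox.inner_sub_prox_sub_prox_nonneg hf hc x y)

theorem norm_sub_prox_sub_le (hf : ConvexOn ℝ univ f) (hc : 0 ≤ c) (hprox : IsProxMap f c prox)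
    (x y : E) : ‖(x - prox x) - (y - prox y)‖ ≤ ‖x - y‖ := by
  have hsplit : x - y = ((x - prox x) - (y - prox y)) + (prox x - prox y) := by abel
  rw [hsplit]
  exact norm_le_norm_add_of_inner_nonneg (hprox.inner_sub_prox_sub_prox_nonneg hf hc x y)

theorem hasGradientAt_moreauEnvelope [CompleteSpace E] (hf : ConvexOn ℝ univ f) (hc : 0 ≤ c)
    (hprox : IsProxMap f c prox) (x : E) : HasGradientAt (moreauEnvelope f c) (x - prox x) x := by
  refine hasGradientAt_of_abs_sub_inner_le (C := 1 / 2) fun y => abs_le.2 ⟨?_, ?_⟩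
  all_goals
    rw [hprox.moreauEnvelope_eq x, hprox.moreauEnvelope_eq y]
  · have hx : 1 / 2 * ‖prox x - x‖ ^ 2 + c * f (prox x)
        ≤ 1 / 2 * ‖prox y - x‖ ^ 2 + c * f (prox y) := hprox x (mem_univ _)
    have hsq : ‖prox y - x‖ ^ 2 = ‖prox y - y‖ ^ 2 - 2 * ⟪y - prox y, y - x⟫ + ‖y - x‖ ^ 2 := by
      rw [show prox y - x = -(y - prox y) + (y - x) by abel, norm_add_sq_real, norm_neg,
        inner_neg_left, norm_sub_rev y (prox y)]
      ring
    have hmono := hprox.inner_sub_prox_sub_nonneg hf hc y x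
    rw [inner_sub_left] at hmono
    linarith
  · have hy : 1 / 2 * ‖prox y - y‖ ^ 2 + c * f (prox y)
        ≤ 1 / 2 * ‖prox x - y‖ ^ 2 + c * f (prox x) := hprox y (mem_univ _)
    have hsq : ‖prox x - y‖ ^ 2 = ‖prox x - x‖ ^ 2 + 2 * ⟪x - prox x, y - x⟫ + ‖y - x‖ ^ 2 := by
      rw [show prox x - y = -((x - prox x) + (y - x)) by abel, norm_neg, norm_add_sq_real,
        norm_sub_rev x (prox x)]
    linarith

end IsProxMap

end InnerProductSpace

theorem smoothed_objective_gradient_general {n : ℕ}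
    (g h : EuclideanSpace ℝ (Fin n) → ℝ)
    (g' prox : EuclideanSpace ℝ (Fin n) → EuclideanSpace ℝ (Fin n))
    (L σ τ : ℝ)
    (hgconv : ConvexOn ℝ Set.univ g)
    (hgrad : ∀ x, HasGradientAt g (g' x) x)
    (hgLip : ∀ x y, ‖g' x - g' y‖ ≤ L * ‖x - y‖)
    (hhconv : ConvexOn ℝ Set.univ h)
    (hτ : τ = 1 / σ ^ 2)
    (hprox : ∀ x, IsMinOn (fun v => (1 / 2) * ‖v - x‖ ^ 2 + σ ^ 2 * h v)
      Set.univ (prox x)) :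
    ConvexOn ℝ Set.univ
      (fun x : EuclideanSpace ℝ (Fin n) =>
        g x + τ * ⨅ v : EuclideanSpace ℝ (Fin n),
          ((1 / 2) * ‖v - x‖ ^ 2 + σ ^ 2 * h v)) ∧
    (∀ x : EuclideanSpace ℝ (Fin n),
      HasGradientAt
        (fun x : EuclideanSpace ℝ (Fin n) =>
          g x + τ * ⨅ v : EuclideanSpace ℝ (Fin n),
            ((1 / 2) * ‖v - x‖ ^ 2 + σ ^ 2 * h v))
        (g' x + τ • (x - prox x)) x) ∧
    ∀ x y : EuclideanSpace ℝ (Fin n),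
      ‖(g' x + τ • (x - prox x)) - (g' y + τ • (y - prox y))‖
        ≤ (L + 2 * τ) * ‖x - y‖ := by
  have hσ2 : 0 ≤ σ ^ 2 := sq_nonneg σ
  have hτ0 : 0 ≤ τ := hτ ▸ by positivity
  refine ⟨hgconv.add ((IsProxMap.convexOn_moreauEnvelope hhconv hσ2 hprox).smul hτ0),
    fun x => (hgrad x).add_const_mul
      (IsProxMap.hasGradientAt_moreauEnvelope hhconv hσ2 hprox x) τ,
    fun x y => ?_⟩
  calc ‖(g' x + τ • (x - prox x)) - (g' y + τ • (y - prox y))‖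
      = ‖(g' x - g' y) + τ • ((x - prox x) - (y - prox y))‖ := by
        congr 1; module
    _ ≤ L * ‖x - y‖ + τ * ‖x - y‖ := by
        refine norm_add_le_of_le (hgLip x y) ?_
        rw [norm_smul, Real.norm_of_nonneg hτ0]
        exact mul_le_mul_of_nonneg_left
          (IsProxMap.norm_sub_prox_sub_le hhconv hσ2 hprox x y) hτ0
    _ ≤ (L + 2 * τ) * ‖x - y‖ := by nlinarith [norm_nonneg (x - y)]

/-- The smoothed objective `f_{σ²} = g + τ·h_{σ²}` (with `τ = 1/σ²` and `h_{σ²}`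
the Moreau envelope of `h`) is convex and differentiable with gradient
`∇f_{σ²}(x) = ∇g(x) + τ(x − prox_{σ²h}(x))`, which is `(L+2τ)`-Lipschitz. -/
theorem smoothed_objective_gradient {n : ℕ}
    (g h : EuclideanSpace ℝ (Fin n) → ℝ)
    (g' prox : EuclideanSpace ℝ (Fin n) → EuclideanSpace ℝ (Fin n))
    (L σ τ : ℝ)
    (hL : 0 < L)
    (hgconv : ConvexOn ℝ Set.univ g)
    (hgrad : ∀ x, HasGradientAt g (g' x) x)
    (hgLip : ∀ x y, ‖g' x - g' y‖ ≤ L * ‖x - y‖)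
    (hhconv : ConvexOn ℝ Set.univ h) (hhcont : Continuous h)
    (hσ : 0 < σ) (hτ : τ = 1 / σ ^ 2)
    (hprox : ∀ x, IsMinOn (fun v => (1 / 2) * ‖v - x‖ ^ 2 + σ ^ 2 * h v)
      Set.univ (prox x)) :
    ConvexOn ℝ Set.univ
      (fun x : EuclideanSpace ℝ (Fin n) =>
        g x + τ * ⨅ v : EuclideanSpace ℝ (Fin n),
          ((1 / 2) * ‖v - x‖ ^ 2 + σ ^ 2 * h v)) ∧
    (∀ x : EuclideanSpace ℝ (Fin n),
      HasGradientAt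
        (fun x : EuclideanSpace ℝ (Fin n) =>
          g x + τ * ⨅ v : EuclideanSpace ℝ (Fin n),
            ((1 / 2) * ‖v - x‖ ^ 2 + σ ^ 2 * h v))
        (g' x + τ • (x - prox x)) x) ∧
    ∀ x y : EuclideanSpace ℝ (Fin n),
      ‖(g' x + τ • (x - prox x)) - (g' y + τ • (y - prox y))‖
        ≤ (L + 2 * τ) * ‖x - y‖ :=
  smoothed_objective_gradient_general g h g' prox L σ τ hgconv hgrad hgLip hhconv hτ hprox
end

section
/- Assume λ < 1 and 0 < γ < (1−λ)τ/(L+(1+λ)τ)², and set η² = 1 − 2γτ(1−λ) + γ²(L+(1+λ)τ)². Then 0 < η² < 1 and for every x ∈ E and every x* ∈ E with G(x*) = 0, ‖x − γ·G(x) − x*‖² ≤ η²·‖x − x*‖². -/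
/-! The operator `G` is strongly monotone with modulus `(1 - λ)τ`, since `∇g` is monotone and
`x ↦ x - D x` is `(1 - λ)`-strongly monotone, and it is Lipschitz with constant `L + (1 + λ)τ`.
For such an operator the step `x ↦ x - γ G x` shrinks squared distances by the factor
`1 - 2γ(1 - λ)τ + γ²(L + (1 + λ)τ)²`, and the bound on `γ` puts this factor in `(0, 1)`. -/

open InnerProductSpace Set

variable {E : Type*} [NormedAddCommGroup E] [InnerProductSpace ℝ E]

theorem ConvexOn.inner_sub_nonneg_of_hasGradientAt [CompleteSpace E] {f : E → ℝ} {f' : E → E}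
    (hf : ConvexOn ℝ univ f) (hf' : ∀ x, HasGradientAt f (f' x) x) (x y : E) :
    0 ≤ ⟪f' x - f' y, x - y⟫_ℝ := by
  have hφ : ConvexOn ℝ univ (f ∘ AffineMap.lineMap y x) := hf.comp_affineMap _
  have hφ' (t : ℝ) :
      HasDerivAt (f ∘ AffineMap.lineMap y x) ⟪f' (AffineMap.lineMap y x t), x - y⟫_ℝ t := by
    simpa using (hf' _).hasFDerivAt.comp_hasDerivAt t AffineMap.hasDerivAt_lineMap
  have hmono := hφ.monotoneOn_deriv (fun t _ ↦ (hφ' t).differentiableAt)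
    (mem_univ 0) (mem_univ 1) zero_le_one
  rw [(hφ' 0).deriv, (hφ' 1).deriv, AffineMap.lineMap_apply_zero,
    AffineMap.lineMap_apply_one] at hmono
  rw [inner_sub_left]
  linarith

section ResidualOperator

variable {A D G : E → E} {τ lam : ℝ}

theorem sub_eq_add_smul_sub_sub (hG : ∀ x, G x = A x + τ • (x - D x)) (x y : E) :
    G x - G y = (A x - A y) + τ • ((x - y) - (D x - D y)) := by
  rw [hG, hG]; module

theorem strongMonotone_add_smul_sub (hA : ∀ x y, 0 ≤ ⟪A x - A y, x - y⟫_ℝ)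
    (hD : ∀ x y, ‖D x - D y‖ ≤ lam * ‖x - y‖) (hτ : 0 ≤ τ)
    (hG : ∀ x, G x = A x + τ • (x - D x)) (x y : E) :
    (1 - lam) * τ * ‖x - y‖ ^ 2 ≤ ⟪G x - G y, x - y⟫_ℝ := by
  have hDxy : ⟪D x - D y, x - y⟫_ℝ ≤ lam * ‖x - y‖ ^ 2 :=
    calc ⟪D x - D y, x - y⟫_ℝ ≤ ‖D x - D y‖ * ‖x - y‖ := real_inner_le_norm _ _
      _ ≤ lam * ‖x - y‖ * ‖x - y‖ := by gcongr; exact hD x y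
      _ = lam * ‖x - y‖ ^ 2 := by ring
  rw [sub_eq_add_smul_sub_sub hG, inner_add_left, real_inner_smul_left, inner_sub_left (x - y),
    real_inner_self_eq_norm_sq]
  nlinarith [hA x y]

theorem lipschitz_add_smul_sub {L : ℝ} (hA : ∀ x y, ‖A x - A y‖ ≤ L * ‖x - y‖)
    (hD : ∀ x y, ‖D x - D y‖ ≤ lam * ‖x - y‖) (hτ : 0 ≤ τ)
    (hG : ∀ x, G x = A x + τ • (x - D x)) (x y : E) :
    ‖G x - G y‖ ≤ (L + (1 + lam) * τ) * ‖x - y‖ := by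
  calc ‖G x - G y‖ ≤ ‖A x - A y‖ + τ * (‖x - y‖ + ‖D x - D y‖) := by
        rw [sub_eq_add_smul_sub_sub hG]
        refine (norm_add_le _ _).trans (add_le_add_right ?_ _)
        rw [norm_smul, Real.norm_of_nonneg hτ]
        gcongr
        exact norm_sub_le _ _
    _ ≤ L * ‖x - y‖ + τ * (‖x - y‖ + lam * ‖x - y‖) := by gcongr <;> simp [hA, hD]
    _ = (L + (1 + lam) * τ) * ‖x - y‖ := by ring

end ResidualOperator

theorem norm_sub_smul_sub_sq_le {T : E → E} {a C γ : ℝ} {x y : E}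
    (hmono : a * ‖x - y‖ ^ 2 ≤ ⟪T x - T y, x - y⟫_ℝ) (hlip : ‖T x - T y‖ ≤ C * ‖x - y‖)
    (hγ : 0 ≤ γ) :
    ‖(x - γ • T x) - (y - γ • T y)‖ ^ 2 ≤ (1 - 2 * γ * a + γ ^ 2 * C ^ 2) * ‖x - y‖ ^ 2 := by
  have hlip2 : ‖T x - T y‖ ^ 2 ≤ C ^ 2 * ‖x - y‖ ^ 2 := by
    rw [← mul_pow]; exact pow_le_pow_left₀ (norm_nonneg _) hlip 2
  have hexpand : ‖(x - γ • T x) - (y - γ • T y)‖ ^ 2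
      = ‖x - y‖ ^ 2 - 2 * γ * ⟪T x - T y, x - y⟫_ℝ + γ ^ 2 * ‖T x - T y‖ ^ 2 := by
    rw [show (x - γ • T x) - (y - γ • T y) = (x - y) - γ • (T x - T y) by module,
      norm_sub_sq_real, norm_smul, real_inner_smul_right, Real.norm_of_nonneg hγ,
      real_inner_comm]
    ring
  rw [hexpand]
  nlinarith [mul_le_mul_of_nonneg_left hmono hγ, mul_le_mul_of_nonneg_left hlip2 (sq_nonneg γ)]

theorem contraction_factor_mem_Ioo {a C γ : ℝ} (haC : a ≤ C) (hγ0 : 0 < γ)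
    (hγ : γ * C ^ 2 < a) :
    0 < 1 - 2 * γ * a + γ ^ 2 * C ^ 2 ∧ 1 - 2 * γ * a + γ ^ 2 * C ^ 2 < 1 := by
  have hC : 0 < C := by nlinarith [sq_nonneg C]
  have hγC : γ * C < 1 := by nlinarith
  have hγa : γ * a < 1 := by nlinarith
  constructor <;> nlinarith [sq_nonneg (1 - γ * a), mul_le_mul_of_nonneg_left haC hγ0.le]

theorem G_step_contraction_general {n : ℕ}
    (g : EuclideanSpace ℝ (Fin n) → ℝ)
    (g' D G : EuclideanSpace ℝ (Fin n) → EuclideanSpace ℝ (Fin n))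
    (L lam τ γ η2 : ℝ)
    (hL : 0 < L)
    (hgconv : ConvexOn ℝ Set.univ g)
    (hgrad : ∀ x, HasGradientAt g (g' x) x)
    (hgLip : ∀ x y, ‖g' x - g' y‖ ≤ L * ‖x - y‖)
    (hlam0 : 0 < lam)
    (hD : ∀ x y, ‖D x - D y‖ ≤ lam * ‖x - y‖)
    (hτ : 0 < τ)
    (hG : ∀ x, G x = g' x + τ • (x - D x))
    (hγ0 : 0 < γ) (hγ : γ < (1 - lam) * τ / (L + (1 + lam) * τ) ^ 2)
    (hη2 : η2 = 1 - 2 * γ * τ * (1 - lam) + γ ^ 2 * (L + (1 + lam) * τ) ^ 2) :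
    0 < η2 ∧ η2 < 1 ∧
      ∀ x xstar : EuclideanSpace ℝ (Fin n), G xstar = 0 →
        ‖x - γ • G x - xstar‖ ^ 2 ≤ η2 * ‖x - xstar‖ ^ 2 := by
  have hγ' : γ * (L + (1 + lam) * τ) ^ 2 < (1 - lam) * τ := by
    rwa [lt_div_iff₀ (by positivity)] at hγ
  have haC : (1 - lam) * τ ≤ L + (1 + lam) * τ := by nlinarith
  rw [show 2 * γ * τ * (1 - lam) = 2 * γ * ((1 - lam) * τ) by ring] at hη2
  subst hη2
  obtain ⟨hη2_pos, hη2_lt_one⟩ := contraction_factor_mem_Ioo haC hγ0 hγ'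
  refine ⟨hη2_pos, hη2_lt_one, fun x xstar hxstar ↦ ?_⟩
  have hstep := norm_sub_smul_sub_sq_le
    (strongMonotone_add_smul_sub (hgconv.inner_sub_nonneg_of_hasGradientAt hgrad) hD hτ.le hG x xstar)
    (lipschitz_add_smul_sub hgLip hD hτ.le hG x xstar) hγ0.le
  rwa [hxstar, smul_zero, sub_zero] at hstep

/-- Proposition 4: for a contractive prior and a sufficiently small step size,
the exact SD-RED step is an `η`-contraction towards any zero of `G`,
with `η² = 1 − 2γτ(1−λ) + γ²(L+(1+λ)τ)² ∈ (0, 1)`. -/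
theorem G_step_contraction {n : ℕ}
    (g : EuclideanSpace ℝ (Fin n) → ℝ)
    (g' D G : EuclideanSpace ℝ (Fin n) → EuclideanSpace ℝ (Fin n))
    (L lam τ γ η2 : ℝ)
    (hL : 0 < L)
    (hgconv : ConvexOn ℝ Set.univ g)
    (hgrad : ∀ x, HasGradientAt g (g' x) x)
    (hgLip : ∀ x y, ‖g' x - g' y‖ ≤ L * ‖x - y‖)
    (hlam0 : 0 < lam) (hlam1 : lam < 1)
    (hD : ∀ x y, ‖D x - D y‖ ≤ lam * ‖x - y‖)
    (hτ : 0 < τ)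
    (hG : ∀ x, G x = g' x + τ • (x - D x))
    (hγ0 : 0 < γ) (hγ : γ < (1 - lam) * τ / (L + (1 + lam) * τ) ^ 2)
    (hη2 : η2 = 1 - 2 * γ * τ * (1 - lam) + γ ^ 2 * (L + (1 + lam) * τ) ^ 2) :
    0 < η2 ∧ η2 < 1 ∧
      ∀ x xstar : EuclideanSpace ℝ (Fin n), G xstar = 0 →
        ‖x - γ • G x - xstar‖ ^ 2 ≤ η2 * ‖x - xstar‖ ^ 2 :=
  G_step_contraction_general g g' D G L lam τ γ η2 hL hgconv hgrad hgLip hlam0 hD hτ hG hγ0 hγ hη2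
end
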